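/- arXiv:1905.11867 — 2 statements merged into one kernel-verified Lean document; each statement's English description precedes it below -/
import Mathlib

section
/- Unrolling the soft value gradient: under the soft Bellman recursion, for every state s and every horizon N ≥ 1, ∇_λ V_λ(s) = Σ_{τ=0}^{N−1} γ^τ Σ_{s',a} P^L_τ(s',a | s) ∇_λ R_λ(s',a) + γ^N Σ_{s'} P^L_N(s' | s) ∇_λ V_λ(s'), where P^L_τ(·|s) are the visitation probabilities of the softmax policy π_λ started from state s. -/
/-!
Differentiating `V = log ∑ₐ exp Q` gives `∇V(s) = ∑ₐ π(a|s) ∇Q(s,a)`, and `∇Q = ∇R + γ T ∇V`, so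
`∇V(s) = ∑ₐ π(a|s) ∇R(s,a) + γ ∑_{s'} P^π(s'|s) ∇V(s')`: the gradient satisfies a linear Bellman
equation for the chain of `π`. Averaging it against the time-`τ` distribution of that chain moves
the remainder from time `τ` to time `τ + 1`; doing this `N` times unrolls the recursion.
-/

open Finset Real

section Unrolling

variable {𝕜 S M : Type*} [Fintype S] [CommSemiring 𝕜] [AddCommMonoid M] [Module 𝕜 M]

theorem sum_smul_eq_add_smul_sum_succ (γ : 𝕜) (K : S → S → 𝕜) (c v : S → M)
    (hv : ∀ s, v s = c s + γ • ∑ s', K s s' • v s')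
    (μ : ℕ → S → 𝕜) (hμ : ∀ n s', μ (n + 1) s' = ∑ s, μ n s * K s s') (n : ℕ) :
    ∑ s, μ n s • v s = ∑ s, μ n s • c s + γ • ∑ s', μ (n + 1) s' • v s' := by
  have hnext : ∑ s, μ n s • ∑ s', K s s' • v s' = ∑ s', μ (n + 1) s' • v s' := by
    simp only [hμ, sum_smul, smul_sum, smul_smul]
    exact sum_comm
  calc ∑ s, μ n s • v s
      = ∑ s, μ n s • c s + γ • ∑ s, μ n s • ∑ s', K s s' • v s' := by
        conv_lhs => enter [2, s]; rw [hv s, smul_add, smul_comm]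
        rw [sum_add_distrib, smul_sum]
    _ = _ := by rw [hnext]

theorem sum_smul_eq_sum_range_add_pow_smul (γ : 𝕜) (K : S → S → 𝕜) (c v : S → M)
    (hv : ∀ s, v s = c s + γ • ∑ s', K s s' • v s')
    (μ : ℕ → S → 𝕜) (hμ : ∀ n s', μ (n + 1) s' = ∑ s, μ n s * K s s') (n : ℕ) :
    ∑ s, μ 0 s • v s
      = ∑ τ ∈ range n, γ ^ τ • ∑ s, μ τ s • c s + γ ^ n • ∑ s, μ n s • v s := by
  induction n with
  | zero => simp
  | succ n ih =>
    rw [ih, sum_smul_eq_add_smul_sum_succ γ K c v hv μ hμ n, smul_add, smul_smul, ← pow_succ,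
      sum_range_succ, add_assoc]

end Unrolling

theorem HasFDerivAt.log_sum_exp {E A : Type*} [NormedAddCommGroup E] [NormedSpace ℝ E]
    [Fintype A] [Nonempty A] {f : A → E → ℝ} {f' : A → StrongDual ℝ E} {x : E}
    (hf : ∀ a, HasFDerivAt (f a) (f' a) x) :
    HasFDerivAt (fun y => Real.log (∑ a, Real.exp (f a y)))
      (∑ a, (Real.exp (f a x) / ∑ b, Real.exp (f b x)) • f' a) x := by
  have hZ : ∑ b, Real.exp (f b x) ≠ 0 := (sum_pos (fun b _ => exp_pos _) univ_nonempty).ne'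
  have hsum := HasFDerivAt.fun_sum (u := univ) fun a _ => (hf a).exp
  convert hsum.log hZ using 1
  simp only [smul_sum, smul_smul, div_eq_inv_mul]

theorem fderiv_soft_value_eq {E S A : Type*} [NormedAddCommGroup E] [NormedSpace ℝ E]
    [Fintype S] [Fintype A] [Nonempty A] (γ : ℝ) (T : S → A → S → ℝ)
    (R Q : E → S → A → ℝ) (V : E → S → ℝ) (x : E)
    (hR : ∀ s a, DifferentiableAt ℝ (fun y => R y s a) x)
    (hV : ∀ s, DifferentiableAt ℝ (fun y => V y s) x)
    (hQ : ∀ y s a, Q y s a = R y s a + γ * ∑ s', T s a s' * V y s')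
    (hVdef : ∀ y s, V y s = log (∑ a, exp (Q y s a)))
    (pol : S → A → ℝ) (hpol : ∀ s a, pol s a = exp (Q x s a) / ∑ b, exp (Q x s b)) (s : S) :
    fderiv ℝ (fun y => V y s) x
      = ∑ a, pol s a • fderiv ℝ (fun y => R y s a) x
        + γ • ∑ s', (∑ a, pol s a * T s a s') • fderiv ℝ (fun y => V y s') x := by
  set DR := fun s a => fderiv ℝ (fun y => R y s a) x
  set DV := fun s => fderiv ℝ (fun y => V y s) x
  have hQ' : ∀ a, HasFDerivAt (fun y => Q y s a) (DR s a + γ • ∑ s', T s a s' • DV s') x := by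
    intro a
    simp only [hQ]
    exact (hR s a).hasFDerivAt.add
      ((HasFDerivAt.fun_sum fun s' _ => (hV s').hasFDerivAt.const_mul (T s a s')).const_mul γ)
  have hV' := HasFDerivAt.log_sum_exp hQ'
  simp only [← hpol, ← hVdef] at hV'
  rw [hV'.fderiv]
  simp only [smul_add, sum_add_distrib, smul_sum, smul_smul, sum_smul]
  rw [sum_comm (s := univ (α := A))]
  congr 1
  refine sum_congr rfl fun s' _ => sum_congr rfl fun a _ => ?_
  rw [mul_left_comm]

theorem soft_value_gradient_unrolled_general {d : ℕ} {S A : Type} [Fintype S] [Fintype A]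
    [Nonempty A] [DecidableEq S]
    (γ : ℝ)
    (T : S → A → S → ℝ)
    (R Q : (Fin d → ℝ) → S → A → ℝ) (V : (Fin d → ℝ) → S → ℝ)
    (hR : ∀ s a, Differentiable ℝ (fun l => R l s a))
    (hV : ∀ s, Differentiable ℝ (fun l => V l s))
    (l : Fin d → ℝ)
    (hQ : ∀ l' s a, Q l' s a = R l' s a + γ * ∑ s', T s a s' * V l' s')
    (hVdef : ∀ l' s, V l' s = Real.log (∑ a, Real.exp (Q l' s a)))
    (pol : S → A → ℝ)
    (hpol : ∀ s a, pol s a = Real.exp (Q l s a) / ∑ a', Real.exp (Q l s a'))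
    (PL : S → ℕ → S → ℝ)
    (hPL0 : ∀ s0 s, PL s0 0 s = if s = s0 then 1 else 0)
    (hPLrec : ∀ s0 τ s', PL s0 (τ + 1) s' = ∑ s, ∑ a, PL s0 τ s * pol s a * T s a s')
    (s0 : S) (N : ℕ) :
    fderiv ℝ (fun l' => V l' s0) l
      = (∑ τ ∈ Finset.range N, γ ^ τ •
            ∑ s', ∑ a, (PL s0 τ s' * pol s' a) • fderiv ℝ (fun l' => R l' s' a) l)
        + γ ^ N • ∑ s', PL s0 N s' • fderiv ℝ (fun l' => V l' s') l := by
  have hbellman := fderiv_soft_value_eq γ T R Q V l (fun s a => hR s a l) (fun s => hV s l)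
    hQ hVdef pol hpol
  have hchain : ∀ τ s', PL s0 (τ + 1) s' = ∑ s, PL s0 τ s * ∑ a, pol s a * T s a s' := by
    simp only [hPLrec, mul_sum, mul_assoc, implies_true]
  have hunrolled := sum_smul_eq_sum_range_add_pow_smul γ _ _ _ hbellman (PL s0) hchain N
  simpa only [hPL0, ite_smul, one_smul, zero_smul, sum_ite_eq', mem_univ, if_true, smul_sum,
    smul_smul] using hunrolled

/-- Unrolling the soft value gradient up to horizon `N`:
`∇V(s₀) = Σ_{τ<N} γ^τ Σ_{s',a} P^L_τ(s',a|s₀) ∇R(s',a) + γ^N Σ_{s'} P^L_N(s'|s₀) ∇V(s')`. -/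
theorem soft_value_gradient_unrolled {d : ℕ} {S A : Type} [Fintype S] [Fintype A]
    [Nonempty S] [Nonempty A] [DecidableEq S] [DecidableEq A]
    (γ : ℝ) (hγ0 : 0 ≤ γ) (hγ1 : γ < 1)
    (T : S → A → S → ℝ) (hT : ∀ s a s', 0 ≤ T s a s')
    (hTsum : ∀ s a, ∑ s', T s a s' = 1)
    (R Q : (Fin d → ℝ) → S → A → ℝ) (V : (Fin d → ℝ) → S → ℝ)
    (hR : ∀ s a, Differentiable ℝ (fun l => R l s a))
    (hV : ∀ s, Differentiable ℝ (fun l => V l s))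
    (l : Fin d → ℝ)
    (hQ : ∀ l' s a, Q l' s a = R l' s a + γ * ∑ s', T s a s' * V l' s')
    (hVdef : ∀ l' s, V l' s = Real.log (∑ a, Real.exp (Q l' s a)))
    (pol : S → A → ℝ)
    (hpol : ∀ s a, pol s a = Real.exp (Q l s a) / ∑ a', Real.exp (Q l s a'))
    (PL : S → ℕ → S → ℝ)
    (hPL0 : ∀ s0 s, PL s0 0 s = if s = s0 then 1 else 0)
    (hPLrec : ∀ s0 τ s', PL s0 (τ + 1) s' = ∑ s, ∑ a, PL s0 τ s * pol s a * T s a s')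
    (s0 : S) (N : ℕ) (hN : 1 ≤ N) :
    fderiv ℝ (fun l' => V l' s0) l
      = (∑ τ ∈ Finset.range N, γ ^ τ •
            ∑ s', ∑ a, (PL s0 τ s' * pol s' a) • fderiv ℝ (fun l' => R l' s' a) l)
        + γ ^ N • ∑ s', PL s0 N s' • fderiv ℝ (fun l' => V l' s') l :=
  soft_value_gradient_unrolled_general γ T R Q V hR hV l hQ hVdef pol hpol PL hPL0 hPLrec s0 N
end

section
/- Contribution of a single timestep to the MCE-IRL gradient: for any τ ≥ 0, ∇_λ [ −γ^τ Σ_{s,a} P^E_τ(s,a) Q_λ(s,a) + γ^{τ+1} Σ_{s'} P^E_{τ+1}(s') V_λ(s') ] = −γ^τ Σ_{s,a} P^E_τ(s,a) ∇_λ R_λ(s,a), i.e., the value-gradient terms cancel via the Markov chain recursion. -/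
/-!
By the recursion `P'(s') = Σ_{s,a} P(s,a) T(s'|s,a)`, the term `γ^{τ+1} Σ_{s'} P'(s') V(s')` equals
`γ^τ Σ_{s,a} P(s,a) · γ Σ_{s'} T(s'|s,a) V(s')`, which is exactly the non-reward part of
`γ^τ Σ_{s,a} P(s,a) Q(s,a)` in the soft Bellman equation. So the objective equals
`-γ^τ Σ_{s,a} P(s,a) R_λ(s,a)` for every `λ`, and only the reward gradient survives.
-/

open Finset

section Cancellation

variable {S A 𝕜 : Type*} [Fintype S] [Fintype A]

theorem sum_next_mul_eq_sum_mul_sum_transition_mul [CommSemiring 𝕜] (T : S → A → S → 𝕜)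
    (P : S → A → 𝕜) (P' V : S → 𝕜) (hrec : ∀ s', P' s' = ∑ s, ∑ a, P s a * T s a s') :
    ∑ s', P' s' * V s' = ∑ s, ∑ a, P s a * ∑ s', T s a s' * V s' := by
  simp only [hrec, sum_mul, mul_sum, mul_assoc]
  rw [sum_comm]
  exact sum_congr rfl fun s _ => sum_comm

theorem timestep_objective_eq_neg_reward [CommRing 𝕜] (γ : 𝕜) (τ : ℕ) (T : S → A → S → 𝕜)
    (R Q P : S → A → 𝕜) (V P' : S → 𝕜)
    (hQ : ∀ s a, Q s a = R s a + γ * ∑ s', T s a s' * V s')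
    (hrec : ∀ s', P' s' = ∑ s, ∑ a, P s a * T s a s') :
    -(γ ^ τ * ∑ s, ∑ a, P s a * Q s a) + γ ^ (τ + 1) * ∑ s', P' s' * V s'
      = -(γ ^ τ * ∑ s, ∑ a, P s a * R s a) := by
  rw [sum_next_mul_eq_sum_mul_sum_transition_mul T P P' V hrec]
  simp only [hQ, mul_add, sum_add_distrib, mul_left_comm (P _ _) γ, ← mul_sum]
  ring

end Cancellation

theorem single_timestep_gradient_general {d : ℕ} {S A : Type} [Fintype S] [Fintype A]
    (γ : ℝ)
    (T : S → A → S → ℝ)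
    (R Q : (Fin d → ℝ) → S → A → ℝ) (V : (Fin d → ℝ) → S → ℝ)
    (hR : ∀ s a, Differentiable ℝ (fun l => R l s a))
    (hQ : ∀ l s a, Q l s a = R l s a + γ * ∑ s', T s a s' * V l s')
    (τ : ℕ) (PEτ : S → A → ℝ) (PEτ' : S → ℝ)
    (hrec : ∀ s', PEτ' s' = ∑ s, ∑ a, PEτ s a * T s a s')
    (l : Fin d → ℝ) :
    fderiv ℝ
        (fun l' =>
          -(γ ^ τ * ∑ s, ∑ a, PEτ s a * Q l' s a)
            + γ ^ (τ + 1) * ∑ s', PEτ' s' * V l' s') l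
      = -(γ ^ τ • ∑ s, ∑ a, PEτ s a • fderiv ℝ (fun l' => R l' s a) l) := by
  have hobjective : (fun l' =>
      -(γ ^ τ * ∑ s, ∑ a, PEτ s a * Q l' s a) + γ ^ (τ + 1) * ∑ s', PEτ' s' * V l' s')
        = fun l' => -(γ ^ τ * ∑ s, ∑ a, PEτ s a * R l' s a) :=
    funext fun l' => timestep_objective_eq_neg_reward γ τ T (R l') (Q l') PEτ (V l') PEτ'
      (hQ l') hrec
  rw [hobjective]
  exact ((HasFDerivAt.fun_sum fun s _ => HasFDerivAt.fun_sum fun a _ =>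
    ((hR s a) l).hasFDerivAt.const_mul (PEτ s a)).const_mul (γ ^ τ)).fun_neg.fderiv

/-- Contribution of a single timestep to the MCE-IRL gradient: the value-gradient
terms cancel via the Markov chain recursion, leaving
`−γ^τ Σ_{s,a} P^E_τ(s,a) ∇R(s,a)`. -/
theorem single_timestep_gradient {d : ℕ} {S A : Type} [Fintype S] [Fintype A]
    [Nonempty S] [Nonempty A]
    (γ : ℝ) (hγ0 : 0 ≤ γ) (hγ1 : γ < 1)
    (T : S → A → S → ℝ)
    (R Q : (Fin d → ℝ) → S → A → ℝ) (V : (Fin d → ℝ) → S → ℝ)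
    (hR : ∀ s a, Differentiable ℝ (fun l => R l s a))
    (hV : ∀ s, Differentiable ℝ (fun l => V l s))
    (hQ : ∀ l s a, Q l s a = R l s a + γ * ∑ s', T s a s' * V l s')
    (τ : ℕ) (PEτ : S → A → ℝ) (PEτ' : S → ℝ)
    (hrec : ∀ s', PEτ' s' = ∑ s, ∑ a, PEτ s a * T s a s')
    (l : Fin d → ℝ) :
    fderiv ℝ
        (fun l' =>
          -(γ ^ τ * ∑ s, ∑ a, PEτ s a * Q l' s a)
            + γ ^ (τ + 1) * ∑ s', PEτ' s' * V l' s') l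
      = -(γ ^ τ • ∑ s, ∑ a, PEτ s a • fderiv ℝ (fun l' => R l' s a) l) :=
  single_timestep_gradient_general γ T R Q V hR hQ τ PEτ PEτ' hrec l
end
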